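/- arXiv:1712.07609 — 6 statements merged into one kernel-verified Lean document; each statement's English description precedes it below -/
import Mathlib

section
/- If a Banach function space X(ℝⁿ) satisfies the weak doubling property (i.e., there exists τ > 1 such that liminf_{R→∞} inf_{y∈ℝⁿ} ‖χ_{B(y,τR)}‖_X / ‖χ_{B(y,R)}‖_X < ∞), then the infimum over all τ > 1 of the doubling constants D_{X,τ} := liminf_{R→∞} inf_{y∈ℝⁿ} ‖χ_{B(y,τR)}‖_X / ‖χ_{B(y,R)}‖_X equals 1. -/
open MeasureTheory Filter ENNReal Metric

noncomputable section

/-- A Banach function norm on measurable functions over a measure space `α`,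
following Bennett–Sharpley: axioms (A1)–(A5). -/
structure BanachFunctionNorm (α : Type) [MeasureSpace α] where
  ρ : (α → ℝ≥0∞) → ℝ≥0∞
  ρ_zero : ∀ f, ρ f = 0 ↔ f =ᵐ[volume] 0
  ρ_smul : ∀ (a : NNReal) (f : α → ℝ≥0∞), ρ (fun x => (a : ℝ≥0∞) * f x) = a * ρ f
  ρ_add : ∀ f g, ρ (fun x => f x + g x) ≤ ρ f + ρ g
  ρ_mono : ∀ f g, (∀ᵐ x ∂volume, f x ≤ g x) → ρ f ≤ ρ g
  ρ_fatou : ∀ (f : ℕ → α → ℝ≥0∞),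
      (∀ j, ∀ᵐ x ∂volume, f j x ≤ f (j+1) x) →
      ρ (fun x => ⨆ j, f j x) = ⨆ j, ρ (f j)
  ρ_finite : ∀ E : Set α, MeasurableSet E → volume E < ⊤ → ρ (E.indicator 1) < ⊤
  ρ_loc_embed : ∀ E : Set α, MeasurableSet E → volume E < ⊤ →
      ∃ C : ℝ≥0∞, C < ⊤ ∧ ∀ f : α → ℝ≥0∞, ∫⁻ x in E, f x ∂volume ≤ C * ρ f

/-- The associate (Köthe dual) norm of a Banach function norm. -/
def BanachFunctionNorm.associate {α : Type} [MeasureSpace α]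
    (X : BanachFunctionNorm α) (g : α → ℝ≥0∞) : ℝ≥0∞ :=
  ⨆ f ∈ {f : α → ℝ≥0∞ | X.ρ f ≤ 1}, ∫⁻ x, f x * g x ∂volume

/-- The doubling constant `D_{X,τ}`. -/
def doublingConst {n : ℕ} (X : BanachFunctionNorm (EuclideanSpace ℝ (Fin n))) (τ : ℝ) : ℝ≥0∞ :=
  Filter.liminf (fun R : ℝ =>
    ⨅ y : EuclideanSpace ℝ (Fin n),
      X.ρ ((Metric.ball y (τ * R)).indicator 1) / X.ρ ((Metric.ball y R).indicator 1))
    Filter.atTop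

/-!
Ball ratios telescope: `‖χ_{B(y,στR)}‖ / ‖χ_{B(y,R)}‖` factors through the radius `τR`,
which makes `D_{X,·}` supermultiplicative, `D_{X,σ} D_{X,τ} ≤ D_{X,στ}`. Hence
`D_{X,τ^{1/m}} ≤ D_{X,τ}^{1/m}`, which tends to `1` when `D_{X,τ} < ∞`, while `D_{X,σ} ≥ 1`
for every `σ ≥ 1`.
-/

namespace BanachFunctionNorm

variable {α : Type} [MeasureSpace α] (X : BanachFunctionNorm α)

lemma ρ_indicator_one_ne_zero {s : Set α} (hs : volume s ≠ 0) : X.ρ (s.indicator 1) ≠ 0 := by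
  rw [Ne, X.ρ_zero, Set.indicator_ae_eq_zero, Function.support_one, Set.inter_univ]
  exact hs

lemma ρ_indicator_one_mono {s t : Set α} (hst : s ⊆ t) :
    X.ρ (s.indicator 1) ≤ X.ρ (t.indicator 1) :=
  X.ρ_mono _ _ (Eventually.of_forall (Set.indicator_le_indicator_of_subset hst fun _ => zero_le))

variable [PseudoMetricSpace α]

def ballNorm (y : α) (R : ℝ) : ℝ≥0∞ := X.ρ ((ball y R).indicator 1)

lemma ballNorm_mono (y : α) {R R' : ℝ} (h : R ≤ R') : X.ballNorm y R ≤ X.ballNorm y R' :=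
  X.ρ_indicator_one_mono (ball_subset_ball h)

lemma ballNorm_ne_zero [(volume : Measure α).IsOpenPosMeasure] (y : α) {R : ℝ} (hR : 0 < R) :
    X.ballNorm y R ≠ 0 :=
  X.ρ_indicator_one_ne_zero (measure_ball_pos volume y hR).ne'

lemma ballNorm_ne_top [OpensMeasurableSpace α] [ProperSpace α]
    [IsFiniteMeasureOnCompacts (volume : Measure α)] (y : α) (R : ℝ) : X.ballNorm y R ≠ ⊤ :=
  (X.ρ_finite _ measurableSet_ball measure_ball_lt_top).ne

variable [OpensMeasurableSpace α] [(volume : Measure α).IsOpenPosMeasure] [ProperSpace α]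
  [IsFiniteMeasureOnCompacts (volume : Measure α)]

lemma one_le_ballNorm_div_ballNorm (y : α) {R R' : ℝ} (hR : 0 < R) (h : R ≤ R') :
    1 ≤ X.ballNorm y R' / X.ballNorm y R := by
  rw [ENNReal.le_div_iff_mul_le (Or.inl (X.ballNorm_ne_zero y hR))
    (Or.inl (X.ballNorm_ne_top y R)), one_mul]
  exact X.ballNorm_mono y h

lemma ballNorm_div_mul_ballNorm_div (y : α) {R₀ R₁ R₂ : ℝ} (hR₁ : 0 < R₁) :
    X.ballNorm y R₂ / X.ballNorm y R₁ * (X.ballNorm y R₁ / X.ballNorm y R₀) =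
      X.ballNorm y R₂ / X.ballNorm y R₀ := by
  rw [div_eq_mul_inv, div_eq_mul_inv, div_eq_mul_inv, mul_assoc, ← mul_assoc _⁻¹,
    ENNReal.inv_mul_cancel (X.ballNorm_ne_zero y hR₁) (X.ballNorm_ne_top y R₁), one_mul]

end BanachFunctionNorm

section DoublingConst

variable {n : ℕ} (X : BanachFunctionNorm (EuclideanSpace ℝ (Fin n)))

lemma doublingConst_eq_liminf (τ : ℝ) :
    doublingConst X τ =
      liminf (fun R : ℝ => ⨅ y, X.ballNorm y (τ * R) / X.ballNorm y R) atTop :=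
  rfl

lemma one_le_doublingConst {τ : ℝ} (hτ : 1 ≤ τ) : 1 ≤ doublingConst X τ := by
  rw [doublingConst_eq_liminf]
  refine le_liminf_of_le (by isBoundedDefault) ?_
  filter_upwards [eventually_gt_atTop 0] with R hR
  exact le_iInf fun y => X.one_le_ballNorm_div_ballNorm y hR (le_mul_of_one_le_left hR.le hτ)

lemma doublingConst_mul_doublingConst_le (σ : ℝ) {τ : ℝ} (hτ : 0 < τ) :
    doublingConst X σ * doublingConst X τ ≤ doublingConst X (σ * τ) := by
  refine ENNReal.mul_le_of_forall_lt fun b hb c hc => ?_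
  rw [doublingConst_eq_liminf] at hb hc ⊢
  have hb' := (tendsto_id.const_mul_atTop hτ).eventually (eventually_lt_of_lt_liminf hb)
  refine le_liminf_of_le (by isBoundedDefault) ?_
  filter_upwards [hb', eventually_lt_of_lt_liminf hc, eventually_gt_atTop 0] with R hbR hcR hR
  refine le_iInf fun y => ?_
  calc b * c ≤ X.ballNorm y (σ * (τ * R)) / X.ballNorm y (τ * R) *
        (X.ballNorm y (τ * R) / X.ballNorm y R) :=
        mul_le_mul' (hbR.le.trans (iInf_le _ y)) (hcR.le.trans (iInf_le _ y))
    _ = X.ballNorm y (σ * τ * R) / X.ballNorm y R := by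
        rw [X.ballNorm_div_mul_ballNorm_div y (mul_pos hτ hR), mul_assoc]

lemma doublingConst_pow_le {σ : ℝ} (hσ : 0 < σ) (m : ℕ) :
    doublingConst X σ ^ m ≤ doublingConst X (σ ^ m) := by
  induction m with
  | zero => simpa using one_le_doublingConst X le_rfl
  | succ m ih =>
    rw [pow_succ, pow_succ]
    exact (mul_le_mul_left ih _).trans (doublingConst_mul_doublingConst_le X _ hσ)

end DoublingConst

lemma ENNReal.exists_lt_pow {C a : ℝ≥0∞} (hC : C ≠ ⊤) (ha : 1 < a) : ∃ m : ℕ, C < a ^ m := by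
  rcases eq_or_ne a ⊤ with rfl | ha_top
  · exact ⟨1, by simpa [lt_top_iff_ne_top] using hC⟩
  lift C to NNReal using hC
  lift a to NNReal using ha_top
  obtain ⟨m, hm⟩ := pow_unbounded_of_one_lt C (ENNReal.one_lt_coe_iff.mp ha)
  exact ⟨m, by exact_mod_cast hm⟩

/-- If a Banach function space on ℝⁿ satisfies the weak doubling property, then the infimum
over all τ > 1 of the doubling constants `D_{X,τ}` equals 1. -/
theorem weak_doubling_inf_doublingConst_eq_one {n : ℕ}
    (X : BanachFunctionNorm (EuclideanSpace ℝ (Fin n)))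
    (h : ∃ τ : ℝ, 1 < τ ∧ doublingConst X τ < ⊤) :
    ⨅ τ ∈ Set.Ioi (1 : ℝ), doublingConst X τ = 1 := by
  obtain ⟨τ, hτ, hτ_fin⟩ := h
  refine le_antisymm (le_of_forall_gt_imp_ge_of_dense fun a ha => ?_)
    (le_iInf₂ fun σ hσ => one_le_doublingConst X (le_of_lt hσ))
  obtain ⟨m, hm⟩ := ENNReal.exists_lt_pow hτ_fin.ne ha
  have hm0 : m ≠ 0 := by
    rintro rfl
    exact (one_le_doublingConst X hτ.le).not_gt (by simpa using hm)
  set σ := τ ^ ((m : ℝ)⁻¹)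
  have hσ : 1 < σ := Real.one_lt_rpow hτ (by positivity)
  have hσ_pow : doublingConst X σ ^ m < a ^ m :=
    (doublingConst_pow_le X (zero_lt_one.trans hσ) m).trans_lt
      (by rwa [Real.rpow_inv_natCast_pow (zero_lt_one.trans hτ).le hm0])
  calc ⨅ τ ∈ Set.Ioi (1 : ℝ), doublingConst X τ ≤ doublingConst X σ := biInf_le _ hσ
    _ ≤ a := ((ENNReal.pow_lt_pow_left_iff hm0).mp hσ_pow).le
end
end

section
/- Let G ⊂ ℝⁿ be a compact set of positive Lebesgue measure with empty interior, and define the weight w_G(x) = 1 for x ∈ G and w_G(x) = 2 for x ∉ G. If ψ : ℝⁿ → ℂ is continuous and its weighted sup-norm satisfies ess sup |ψ w_G| ≤ 1, then |ψ(x)| ≤ 1/2 for all x ∈ ℝⁿ. -/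
open MeasureTheory Filter ENNReal Metric Classical

noncomputable section

/-- If `G ⊂ ℝⁿ` is compact with positive measure and empty interior,
`w_G = 1` on `G` and `2` off `G`, and a continuous `ψ` satisfies
`‖ψ‖_{L^∞(ℝⁿ, w_G)} ≤ 1`, then `|ψ(x)| ≤ 1/2` everywhere. -/
theorem abs_le_half_of_continuous_weighted_sup_le_one {n : ℕ}
    (G : Set (EuclideanSpace ℝ (Fin n))) (hG : IsCompact G)
    (hGpos : 0 < volume G) (hGint : interior G = ∅)
    (ψ : EuclideanSpace ℝ (Fin n) → ℂ) (hψ : Continuous ψ)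
    (h : essSup (fun x => (‖ψ x‖₊ : ℝ≥0∞) * (if x ∈ G then 1 else 2)) volume ≤ 1) :
    ∀ x : EuclideanSpace ℝ (Fin n), ‖ψ x‖ ≤ 1 / 2 := by
  intro x
  by_contra hx
  push_neg at hx
  have hae : ∀ᵐ y ∂(volume : Measure (EuclideanSpace ℝ (Fin n))),
      (‖ψ y‖₊ : ℝ≥0∞) * (if y ∈ G then 1 else 2) ≤ 1 :=
    (ENNReal.ae_le_essSup _).mono fun y hy => hy.trans h
  have hVopen : IsOpen {y : EuclideanSpace ℝ (Fin n) | 1/2 < ‖ψ y‖} :=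
    isOpen_lt continuous_const hψ.norm
  have hdense : Dense (Gᶜ : Set (EuclideanSpace ℝ (Fin n))) :=
    interior_eq_empty_iff_dense_compl.mp hGint
  have hUne : ({y : EuclideanSpace ℝ (Fin n) | 1/2 < ‖ψ y‖} ∩ Gᶜ).Nonempty :=
    hdense.inter_open_nonempty _ hVopen ⟨x, hx⟩
  have hUopen : IsOpen ({y : EuclideanSpace ℝ (Fin n) | 1/2 < ‖ψ y‖} ∩ Gᶜ) :=
    hVopen.inter hG.isClosed.isOpen_compl
  have hpos : 0 < volume ({y : EuclideanSpace ℝ (Fin n) | 1/2 < ‖ψ y‖} ∩ Gᶜ) :=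
    hUopen.measure_pos volume hUne
  have hzero : volume ({y : EuclideanSpace ℝ (Fin n) | 1/2 < ‖ψ y‖} ∩ Gᶜ) = 0 := by
    refine measure_mono_null ?_ (ae_iff.mp hae)
    rintro y ⟨hy1, hy2⟩
    simp only [Set.mem_setOf_eq, if_neg hy2, not_le]
    have h1 : (1 : ℝ) < ‖ψ y‖ * 2 := by
      have := hy1; simp only [Set.mem_setOf_eq] at this; linarith
    have h2 : (1 : NNReal) < ‖ψ y‖₊ * 2 := by
      rw [← NNReal.coe_lt_coe]
      push_cast
      simpa [coe_nnnorm] using h1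
    calc (1 : ℝ≥0∞) < ((‖ψ y‖₊ * 2 : NNReal) : ℝ≥0∞) := by exact_mod_cast h2
      _ = (‖ψ y‖₊ : ℝ≥0∞) * 2 := by push_cast; ring
  exact absurd hzero hpos.ne'
end
end

section
/- Let G ⊂ ℝⁿ be a compact set of positive measure with empty interior, w_G = χ_G + 2·χ_{ℝⁿ∖G}, and f ∈ L¹(ℝⁿ, w_G^{-1}) with f ≥ 0 such that supp f ∩ G has positive measure. Then ‖f‖_{L¹(ℝⁿ, w_G^{-1})} is strictly greater than sup{ |∫ f ψ| : ψ ∈ C(ℝⁿ), ‖ψ‖_{L^∞(ℝⁿ, w_G)} ≤ 1 }. -/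
open MeasureTheory Filter ENNReal Metric Classical

noncomputable section

/-- For `G ⊂ ℝⁿ` compact with positive measure and empty interior,
`w_G = 1` on `G`, `= 2` off `G`, and `f ∈ L¹(ℝⁿ, w_G⁻¹)`, `f ≥ 0`, with
`supp f ∩ G` of positive measure, the norm `‖f‖_{L¹(ℝⁿ,w_G⁻¹)}` strictly exceeds
the supremum of `|∫ f ψ|` over continuous `ψ` with `‖ψ‖_{L^∞(ℝⁿ,w_G)} ≤ 1`. -/
theorem weighted_L1_norm_gt_sup_pairing_with_continuous {n : ℕ}
    (G : Set (EuclideanSpace ℝ (Fin n))) (hG : IsCompact G)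
    (hGpos : 0 < volume G) (hGint : interior G = ∅)
    (w : EuclideanSpace ℝ (Fin n) → ℝ)
    (hw : w = fun x => if x ∈ G then (1 : ℝ) else 2)
    (f : EuclideanSpace ℝ (Fin n) → ℝ) (hf0 : ∀ x, 0 ≤ f x)
    (hfmeas : Measurable f)
    (hfint : Integrable (fun x => f x * (w x)⁻¹))
    (hsupp : 0 < volume (Function.support f ∩ G)) :
    sSup {r : ℝ | ∃ ψ : EuclideanSpace ℝ (Fin n) → ℂ, Continuous ψ ∧
        essSup (fun x => (‖ψ x‖₊ : ℝ≥0∞) * ENNReal.ofReal (w x)) volume ≤ 1 ∧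
        r = ‖∫ x, (f x : ℂ) * ψ x‖} <
      ∫ x, f x * (w x)⁻¹ := by
  have hGc : IsClosed G := hG.isClosed
  -- integrability of f
  have hwinv : ∀ x, (w x)⁻¹ = if x ∈ G then (1 : ℝ) else 2⁻¹ := by
    intro x; rw [hw]; by_cases hx : x ∈ G <;> simp [hx]
  have hfi : Integrable f := by
    refine (hfint.const_mul 2).mono' hfmeas.aestronglyMeasurable
      (Eventually.of_forall fun x => ?_)
    rw [Real.norm_eq_abs, abs_of_nonneg (hf0 x), hwinv x]
    by_cases hx : x ∈ G <;> simp [hx] <;> nlinarith [hf0 x]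
  -- pointwise bound for admissible ψ
  have hpsi : ∀ ψ : EuclideanSpace ℝ (Fin n) → ℂ, Continuous ψ →
      essSup (fun x => (‖ψ x‖₊ : ℝ≥0∞) * ENNReal.ofReal (w x)) volume ≤ 1 →
      ∀ x, ‖ψ x‖ ≤ 1 / 2 := by
    intro ψ hψc hψe
    have hae : ∀ᵐ x, (‖ψ x‖₊ : ℝ≥0∞) * ENNReal.ofReal (w x) ≤ 1 :=
      (ae_le_essSup _).mono fun x hx => hx.trans hψe
    -- on Gᶜ, a.e. bound ‖ψ‖ ≤ 1/2
    have haec : ∀ᵐ x, x ∉ G → ‖ψ x‖ ≤ 1 / 2 := by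
      filter_upwards [hae] with x hx hxG
      rw [hw] at hx
      simp only [hxG, if_false] at hx
      by_contra hcon
      push_neg at hcon
      have h1 : (1 : ℝ≥0∞) < (‖ψ x‖₊ : ℝ≥0∞) * ENNReal.ofReal 2 := by
        rw [ENNReal.ofReal_ofNat, ← ENNReal.coe_ofNat, ← ENNReal.coe_mul, ← ENNReal.coe_one,
          ENNReal.coe_lt_coe, ← NNReal.coe_lt_coe]
        push_cast
        linarith
      exact absurd hx h1.not_ge
    -- the open set where the bound fails off G is null, hence empty
    set U : Set (EuclideanSpace ℝ (Fin n)) := Gᶜ ∩ {x | 1 / 2 < ‖ψ x‖} with hU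
    have hUopen : IsOpen U :=
      hGc.isOpen_compl.inter (isOpen_lt continuous_const hψc.norm)
    have hUnull : volume U = 0 := by
      refine measure_mono_null ?_ (ae_iff.mp haec)
      intro x hx
      simp only [Set.mem_setOf_eq]
      rcases hx with ⟨hx1, hx2⟩
      exact fun h => absurd (h hx1) (not_le.mpr hx2)
    have hUempty : U = ∅ := (hUopen.measure_zero_iff_eq_empty).mp hUnull
    have hcompl : ∀ x ∉ G, ‖ψ x‖ ≤ 1 / 2 := by
      intro x hx
      by_contra hcon
      push_neg at hcon
      have : x ∈ U := ⟨hx, hcon⟩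
      rw [hUempty] at this; exact this
    -- Gᶜ is dense since interior G = ∅
    have hdense : Dense (Gᶜ : Set (EuclideanSpace ℝ (Fin n))) := by
      rw [dense_iff_closure_eq, closure_compl, hGint, Set.compl_empty]
    have hclosed : IsClosed {x : EuclideanSpace ℝ (Fin n) | ‖ψ x‖ ≤ 1 / 2} :=
      isClosed_le hψc.norm continuous_const
    intro x
    have := hclosed.closure_subset_iff.mpr (fun y hy => hcompl y hy)
    have hx : x ∈ closure (Gᶜ : Set (EuclideanSpace ℝ (Fin n))) := by
      rw [hdense.closure_eq]; trivial
    exact this hx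
  -- nonnegativity of ∫ f
  have hfint_nonneg : 0 ≤ ∫ x, f x := integral_nonneg hf0
  -- sup ≤ (1/2) ∫ f
  have hsup : sSup {r : ℝ | ∃ ψ : EuclideanSpace ℝ (Fin n) → ℂ, Continuous ψ ∧
      essSup (fun x => (‖ψ x‖₊ : ℝ≥0∞) * ENNReal.ofReal (w x)) volume ≤ 1 ∧
      r = ‖∫ x, (f x : ℂ) * ψ x‖} ≤ (1 / 2) * ∫ x, f x := by
    refine Real.sSup_le ?_ (by positivity)
    rintro r ⟨ψ, hψc, hψe, rfl⟩
    have hb := hpsi ψ hψc hψe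
    calc ‖∫ x, (f x : ℂ) * ψ x‖ ≤ ∫ x, (1 / 2) * f x := by
          refine norm_integral_le_of_norm_le ((hfi.const_mul _)) ?_
          filter_upwards with x
          rw [norm_mul, Complex.norm_real, Real.norm_eq_abs, abs_of_nonneg (hf0 x)]
          exact mul_le_mul_of_nonneg_left (hb x) (hf0 x) |>.trans_eq (mul_comm _ _)
      _ = (1 / 2) * ∫ x, f x := integral_const_mul _ _
  -- strict inequality: (1/2) ∫ f < ∫ f w⁻¹
  refine hsup.trans_lt ?_
  set g : EuclideanSpace ℝ (Fin n) → ℝ := fun x => f x * ((w x)⁻¹ - 1 / 2) with hgdef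
  have hg0 : 0 ≤ g := by
    intro x
    apply mul_nonneg (hf0 x)
    rw [hwinv x]; by_cases hx : x ∈ G <;> simp [hx] <;> norm_num
  have hgi : Integrable g := by
    have : g = fun x => f x * (w x)⁻¹ - (1 / 2) * f x := by
      funext x; simp [hgdef]; ring
    rw [this]
    exact hfint.sub (hfi.const_mul _)
  have hgsupp : Function.support g = Function.support f ∩ G := by
    ext x
    simp only [Function.mem_support, hgdef, Set.mem_inter_iff, mul_ne_zero_iff]
    rw [hwinv x]
    by_cases hx : x ∈ G <;> simp [hx] <;> norm_num
  have hgpos : 0 < ∫ x, g x := by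
    rw [integral_pos_iff_support_of_nonneg hg0 hgi, hgsupp]
    exact hsupp
  have hsplit : ∫ x, f x * (w x)⁻¹ = (∫ x, g x) + (1 / 2) * ∫ x, f x := by
    rw [← integral_const_mul]
    rw [← integral_add hgi (hfi.const_mul _)]
    congr 1; funext x; simp [hgdef]; ring
  rw [hsplit]
  linarith
end
end

section
/- For every Banach function space X(ℝⁿ) and every f ∈ X(ℝⁿ), the norm of f can be computed by duality with simple compactly supported functions: ‖f‖_X = sup{ |∫ f s| : s simple with compact support, ‖s‖_{X'} ≤ 1 }. -/
/-!
`≥` is Hölder's inequality for the associate norm. For `≤`, the Fatou property reduces `ρ(|f|)` to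
the truncations `min(|f|, m)` cut off to a compact exhaustion. Such a `φ` is bounded and supported
on a set `B` of finite measure; if (after scaling) `1 < ρ(φ)`, then `φ` lies outside the unit ball
of `X` inside `L²(B)`, which is convex and, by Fatou again, closed. Hahn–Banach and Riesz give
`g ∈ L²(B)` and `u > 0` with `⟪g, ψ⟫ < u` on that ball and `u < ⟪g, φ⟫`; then `G = |g| / u` has
`ρ'(G) ≤ 1` and `1 < ∫ φ G`, which is the Lorentz–Luxemburg inequality `ρ ≤ ρ''` for `φ`.
Monotone convergence replaces `G` by a compactly supported simple function below it, and dominated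
convergence replaces the phase `conj f / |f|` by simple functions.
-/

open MeasureTheory Filter ENNReal Metric

noncomputable section

open scoped NNReal InnerProductSpace ComplexConjugate Topology

theorem ENNReal.iSup_min_natCast (a : ℝ≥0∞) : ⨆ k : ℕ, min a k = a := by
  rw [← inf_iSup_eq, ENNReal.iSup_natCast, inf_top_eq]

theorem ENNReal.one_lt_inv_mul_iff {a b : ℝ≥0∞} (h0 : a ≠ 0) (ht : a ≠ ∞) :
    1 < a⁻¹ * b ↔ a < b := by
  rw [mul_comm, ← div_eq_mul_inv, ENNReal.lt_div_iff_mul_lt (Or.inl h0) (Or.inl ht), one_mul]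

section IndicatorSeq

variable {α : Type*} {K : ℕ → Set α} {F : ℕ → α → ℝ≥0∞}

theorem monotone_indicator_seq (hK : Monotone K) (hF : Monotone F) :
    Monotone fun m => (K m).indicator (F m) := fun _ _ hij x =>
  (Set.indicator_le_indicator_of_subset (hK hij) (fun _ => zero_le) x).trans
    (Set.indicator_le_indicator (hF hij x))

theorem iSup_indicator_seq_apply (hK : Monotone K) (hKU : ⋃ m, K m = Set.univ) (hF : Monotone F)
    (x : α) : ⨆ m, (K m).indicator (F m) x = ⨆ m, F m x := by
  obtain ⟨m₀, hm₀⟩ := Set.mem_iUnion.1 (hKU.symm ▸ Set.mem_univ x)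
  refine le_antisymm (iSup_mono fun m => Set.indicator_le_self _ _ x) (iSup_le fun k => ?_)
  refine le_iSup_of_le (max k m₀) ?_
  rw [Set.indicator_of_mem (hK (le_max_right k m₀) hm₀)]
  exact hF (le_max_left k m₀) x

end IndicatorSeq

theorem MeasureTheory.lintegral_mul_indicator {α : Type*} [MeasurableSpace α] {μ : Measure α}
    {B : Set α} (hB : MeasurableSet B) (φ G : α → ℝ≥0∞) :
    ∫⁻ x, φ x * B.indicator G x ∂μ = ∫⁻ x in B, φ x * G x ∂μ := by
  simp_rw [← Set.indicator_mul_right]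
  exact lintegral_indicator hB _

section Phase

variable {𝕜 : Type*} [RCLike 𝕜]

theorem RCLike.nnnorm_ofReal_coe (t : ℝ≥0) : ‖((t : ℝ) : 𝕜)‖₊ = t := by
  ext
  simp

def phase (z : 𝕜) : 𝕜 := conj z / ‖z‖

theorem mul_phase (z : 𝕜) : z * phase z = ‖z‖ := by
  rcases eq_or_ne z 0 with rfl | hz
  · simp [phase]
  · rw [phase, mul_div_assoc', RCLike.mul_conj, sq, mul_div_assoc,
      div_self (RCLike.ofReal_ne_zero.2 (norm_ne_zero_iff.2 hz)), mul_one]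

theorem norm_phase_le_one (z : 𝕜) : ‖phase z‖ ≤ 1 := by
  rw [phase, norm_div, RCLike.norm_conj, RCLike.norm_ofReal, abs_norm]
  exact div_self_le_one _

theorem measurable_phase : Measurable (phase : 𝕜 → 𝕜) :=
  RCLike.continuous_conj.measurable.div (RCLike.continuous_ofReal.comp continuous_norm).measurable

end Phase

theorem exists_inner_lt_of_notMem {E : Type*} [NormedAddCommGroup E] [InnerProductSpace ℝ E]
    [CompleteSpace E] {C : Set E} {x : E} (hC : Convex ℝ C) (hC_closed : IsClosed C)
    (hx : x ∉ C) : ∃ g : E, ∃ u : ℝ, (∀ y ∈ C, ⟪g, y⟫_ℝ < u) ∧ u < ⟪g, x⟫_ℝ := by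
  obtain ⟨Φ, u, hΦC, hΦx⟩ := geometric_hahn_banach_closed_point hC hC_closed hx
  refine ⟨(InnerProductSpace.toDual ℝ E).symm Φ, u, fun y hy => ?_, ?_⟩
  · simpa only [InnerProductSpace.toDual_symm_apply] using hΦC y hy
  · simpa only [InnerProductSpace.toDual_symm_apply] using hΦx

theorem exists_simpleFunc_le_lt_lintegral_mul {α : Type*} [MeasurableSpace α]
    [TopologicalSpace α] [SigmaCompactSpace α] [T2Space α] [OpensMeasurableSpace α]
    {μ : Measure α} {φ G : α → ℝ≥0∞} (hφ : AEMeasurable φ μ) (hG : Measurable G) {c : ℝ≥0∞}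
    (hc : c < ∫⁻ x, φ x * G x ∂μ) :
    ∃ r : SimpleFunc α ℝ≥0, HasCompactSupport r ∧ (∀ x, (r x : ℝ≥0∞) ≤ G x) ∧
      c < ∫⁻ x, φ x * r x ∂μ := by
  have hK : Monotone (compactCovering α) := fun _ _ h => compactCovering_subset α h
  set e : ℕ → SimpleFunc α ℝ≥0∞ := fun k => (SimpleFunc.eapprox G k).restrict (compactCovering α k)
  have he (k : ℕ) : ⇑(e k) = (compactCovering α k).indicator (SimpleFunc.eapprox G k) :=
    SimpleFunc.coe_restrict _ (isCompact_compactCovering α k).measurableSet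
  have he_mono : Monotone fun k => ⇑(e k) := by
    simpa only [he] using monotone_indicator_seq hK (SimpleFunc.monotone_eapprox G)
  have he_sup (x : α) : ⨆ k, e k x = G x := by
    simp only [he]
    rw [iSup_indicator_seq_apply hK (iUnion_compactCovering α) (SimpleFunc.monotone_eapprox G),
      SimpleFunc.iSup_eapprox_apply hG]
  have hlim : ∫⁻ x, φ x * G x ∂μ = ⨆ k, ∫⁻ x, φ x * e k x ∂μ := by
    simp_rw [← he_sup, ENNReal.mul_iSup]
    exact lintegral_iSup' (fun k => hφ.mul (e k).measurable.aemeasurable)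
      (Eventually.of_forall fun x _ _ hij => mul_le_mul_right (he_mono hij x) _)
  obtain ⟨k, hk⟩ := lt_iSup_iff.1 (hlim ▸ hc)
  have he_top (x : α) : e k x ≠ ∞ := by
    rw [he]
    exact ((Set.indicator_le_self _ _ x).trans_lt (SimpleFunc.eapprox_lt_top G k x)).ne
  refine ⟨(e k).map ENNReal.toNNReal, ?_, fun x => ?_, ?_⟩
  · refine HasCompactSupport.intro (isCompact_compactCovering α k) fun x hx => ?_
    simp [he, Set.indicator_of_notMem hx]
  · rw [SimpleFunc.map_apply, ENNReal.coe_toNNReal (he_top x), ← he_sup x]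
    exact le_iSup (fun k => e k x) k
  · simpa only [SimpleFunc.map_apply, ENNReal.coe_toNNReal (he_top _)] using hk

section PhaseApproximation

variable {α : Type*} [MeasurableSpace α] {μ : Measure α} {𝕜 : Type*} [RCLike 𝕜]

theorem exists_simpleFunc_norm_le_one_lt_norm_integral_mul {h : α → 𝕜} (hh : Integrable h μ)
    {c : ℝ} (hc : c < ∫ x, ‖h x‖ ∂μ) :
    ∃ s : SimpleFunc α 𝕜, (∀ x, ‖s x‖ ≤ 1) ∧ c < ‖∫ x, h x * s x ∂μ‖ := by
  set h' := hh.aestronglyMeasurable.mk h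
  have hp : Measurable fun x => phase (h' x) :=
    measurable_phase.comp hh.aestronglyMeasurable.stronglyMeasurable_mk.measurable
  have h0 : (0 : 𝕜) ∈ closedBall (0 : 𝕜) 1 := mem_closedBall_self zero_le_one
  set s : ℕ → SimpleFunc α 𝕜 := SimpleFunc.approxOn _ hp (closedBall 0 1) 0 h0
  have hs_le (j : ℕ) (x : α) : ‖s j x‖ ≤ 1 :=
    mem_closedBall_zero_iff.1 (SimpleFunc.approxOn_mem hp h0 j x)
  have hlim : Tendsto (fun j => ∫ x, h x * s j x ∂μ) atTop
      (𝓝 (∫ x, h x * phase (h' x) ∂μ)) := by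
    refine tendsto_integral_of_dominated_convergence (fun x => ‖h x‖)
      (fun j => hh.aestronglyMeasurable.mul (s j).aestronglyMeasurable) hh.norm
      (fun j => Eventually.of_forall fun x => ?_) (Eventually.of_forall fun x => ?_)
    · rw [norm_mul]
      exact mul_le_of_le_one_right (norm_nonneg _) (hs_le j x)
    · exact (SimpleFunc.tendsto_approxOn hp h0 (subset_closure
        (mem_closedBall_zero_iff.2 (norm_phase_le_one _)))).const_mul (h x)
  have hval : ∫ x, h x * phase (h' x) ∂μ = ((∫ x, ‖h x‖ ∂μ : ℝ) : 𝕜) := by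
    rw [← integral_ofReal]
    refine integral_congr_ae ?_
    filter_upwards [hh.aestronglyMeasurable.ae_eq_mk] with x hx
    rw [hx, mul_phase]
  have hnorm : ‖((∫ x, ‖h x‖ ∂μ : ℝ) : 𝕜)‖ = ∫ x, ‖h x‖ ∂μ := by
    rw [RCLike.norm_ofReal, abs_of_nonneg (integral_nonneg fun _ => norm_nonneg _)]
  rw [hval] at hlim
  obtain ⟨j, hj⟩ := (hlim.norm.eventually (lt_mem_nhds (hnorm ▸ hc))).exists
  exact ⟨s j, hs_le j, hj⟩

theorem exists_simpleFunc_nnnorm_le_lt_enorm_integral_mul {f : α → 𝕜}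
    (hf : AEStronglyMeasurable f μ) (r : SimpleFunc α ℝ≥0)
    (hfr : ∫⁻ x, ‖f x‖ₑ * r x ∂μ ≠ ∞) {c : ℝ≥0∞} (hc : c < ∫⁻ x, ‖f x‖ₑ * r x ∂μ) :
    ∃ s : SimpleFunc α 𝕜, (∀ x, ‖s x‖₊ ≤ r x) ∧ c < ‖∫ x, f x * s x ∂μ‖ₑ := by
  set R : SimpleFunc α 𝕜 := r.map fun t : ℝ≥0 => ((t : ℝ) : 𝕜)
  have hR (x : α) : ‖f x * R x‖ₑ = ‖f x‖ₑ * r x := by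
    rw [enorm_mul, enorm_eq_nnnorm (R x), SimpleFunc.map_apply, RCLike.nnnorm_ofReal_coe]
  have hint : Integrable (fun x => f x * R x) μ :=
    ⟨hf.mul R.aestronglyMeasurable, by simpa only [HasFiniteIntegral, hR] using hfr.lt_top⟩
  have hc' : c.toReal < ∫ x, ‖f x * R x‖ ∂μ := by
    rw [integral_norm_eq_lintegral_enorm hint.aestronglyMeasurable, lintegral_congr hR]
    exact (ENNReal.toReal_lt_toReal hc.ne_top hfr).2 hc
  obtain ⟨s, hs_le, hcs⟩ := exists_simpleFunc_norm_le_one_lt_norm_integral_mul hint hc'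
  refine ⟨R * s, fun x => ?_, ?_⟩
  · rw [SimpleFunc.coe_mul, Pi.mul_apply, nnnorm_mul, SimpleFunc.map_apply,
      RCLike.nnnorm_ofReal_coe]
    exact mul_le_of_le_one_right zero_le (hs_le x)
  · simp_rw [SimpleFunc.coe_mul, Pi.mul_apply, ← mul_assoc]
    rw [← ofReal_norm, ENNReal.lt_ofReal_iff_toReal_lt hc.ne_top]
    exact hcs

end PhaseApproximation

namespace BanachFunctionNorm

variable {α : Type} [MeasureSpace α] (X : BanachFunctionNorm α) {B : Set α}

theorem ρ_congr_ae {f g : α → ℝ≥0∞} (h : f =ᵐ[volume] g) : X.ρ f = X.ρ g :=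
  le_antisymm (X.ρ_mono _ _ h.le) (X.ρ_mono _ _ h.symm.le)

theorem ρ_liminf_le (F : ℕ → α → ℝ≥0∞) :
    X.ρ (fun x => liminf (fun k => F k x) atTop) ≤ liminf (fun k => X.ρ (F k)) atTop := by
  simp_rw [liminf_eq_iSup_iInf_of_nat]
  rw [X.ρ_fatou (fun j x => ⨅ i ≥ j, F i x)]
  · exact iSup_mono fun j => le_iInf₂ fun i hi =>
      X.ρ_mono _ _ (Eventually.of_forall fun x => iInf₂_le i hi)
  · exact fun j => Eventually.of_forall fun x =>
      iInf₂_mono' fun i hi => ⟨i, j.le_succ.trans hi, le_rfl⟩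

theorem lintegral_mul_le_associate {φ : α → ℝ≥0∞} (hφ : X.ρ φ ≤ 1) (g : α → ℝ≥0∞) :
    ∫⁻ x, φ x * g x ≤ X.associate g :=
  le_iSup₂_of_le (f := fun φ _ => ∫⁻ x, φ x * g x) φ hφ le_rfl

theorem lintegral_mul_le_ρ (φ : α → ℝ≥0∞) {g : α → ℝ≥0∞} (hg : X.associate g ≤ 1) :
    ∫⁻ x, φ x * g x ≤ X.ρ φ := by
  refine le_of_forall_gt_imp_ge_of_dense fun c hc => ?_
  rcases eq_or_ne c ⊤ with rfl | hc_top
  · exact le_top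
  lift c to ℝ≥0 using hc_top
  have hc0 : (c : ℝ≥0∞) ≠ 0 := (zero_le.trans_lt hc).ne'
  have hscaled : X.ρ (fun x => ((c⁻¹ : ℝ≥0) : ℝ≥0∞) * φ x) ≤ 1 := by
    rw [X.ρ_smul, ENNReal.coe_inv (by simpa using hc0),
      ENNReal.inv_mul_le_iff hc0 ENNReal.coe_ne_top, mul_one]
    exact hc.le
  have h := (X.lintegral_mul_le_associate hscaled g).trans hg
  simp_rw [mul_assoc] at h
  rwa [lintegral_const_mul' _ _ ENNReal.coe_ne_top, ENNReal.coe_inv (by simpa using hc0),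
    ENNReal.inv_mul_le_iff hc0 ENNReal.coe_ne_top, mul_one] at h

theorem associate_mono {g₁ g₂ : α → ℝ≥0∞} (h : ∀ x, g₁ x ≤ g₂ x) :
    X.associate g₁ ≤ X.associate g₂ :=
  iSup₂_mono fun _ _ => lintegral_mono fun x => mul_le_mul_right (h x) _

theorem associate_const_mul {c : ℝ≥0∞} (hc : c ≠ ∞) (g : α → ℝ≥0∞) :
    X.associate (fun x => c * g x) = c * X.associate g := by
  simp only [associate, ENNReal.mul_iSup, ← lintegral_const_mul' _ _ hc, mul_left_comm c]

theorem associate_le_of_forall_measurable {G : α → ℝ≥0∞} (hG : Measurable G)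
    (hG_top : ∀ x, G x ≠ ∞) {c : ℝ≥0∞}
    (h : ∀ φ : α → ℝ≥0∞, Measurable φ → X.ρ φ ≤ 1 → ∫⁻ x, φ x * G x ≤ c) :
    X.associate G ≤ c := by
  refine iSup₂_le fun φ hφ => ?_
  obtain ⟨p, hp, hpφ, hp_eq⟩ := exists_measurable_le_lintegral_eq volume (fun x => φ x * G x)
  -- `p / G` is a measurable minorant of `φ` that loses nothing in the integral against `G`.
  have hp_zero : ∀ x, G x = 0 → p x = 0 := fun x hx => by simpa [hx] using hpφ x
  have hle : ∀ x, p x / G x ≤ φ x := fun x => by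
    rcases eq_or_ne (G x) 0 with hx | hx
    · simp [hp_zero x hx]
    · exact ENNReal.div_le_of_le_mul (hpφ x)
  have hp_le : ∀ x, p x ≤ p x / G x * G x := fun x => by
    rcases eq_or_ne (G x) 0 with hx | hx
    · simp [hp_zero x hx]
    · rw [ENNReal.div_mul_cancel hx (hG_top x)]
  rw [hp_eq]
  exact (lintegral_mono hp_le).trans
    (h _ (hp.div hG) ((X.ρ_mono _ _ (Eventually.of_forall hle)).trans hφ))

theorem associate_le_of_forall_bounded {G : α → ℝ≥0∞} (hG : Measurable G)
    (hG_top : ∀ x, G x ≠ ∞) {c : ℝ≥0∞}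
    (h : ∀ φ : α → ℝ≥0∞, Measurable φ → (∃ M : ℝ≥0, ∀ x, φ x ≤ M) → X.ρ φ ≤ 1 →
      ∫⁻ x, φ x * G x ≤ c) :
    X.associate G ≤ c := by
  refine X.associate_le_of_forall_measurable hG hG_top fun φ hφ hρ => ?_
  have htrunc (k : ℕ) : ∫⁻ x, min (φ x) k * G x ≤ c :=
    h _ (hφ.min measurable_const) ⟨k, fun x => by simp⟩
      ((X.ρ_mono _ _ (Eventually.of_forall fun x => min_le_left _ _)).trans hρ)
  calc ∫⁻ x, φ x * G x = ∫⁻ x, ⨆ k : ℕ, min (φ x) k * G x := by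
        congr with x
        rw [← ENNReal.iSup_mul, ENNReal.iSup_min_natCast]
    _ = ⨆ k : ℕ, ∫⁻ x, min (φ x) k * G x :=
        lintegral_iSup (fun k => (hφ.min measurable_const).mul hG) fun i j hij x =>
          mul_le_mul_left (min_le_min_left _ (by exact_mod_cast hij)) _
    _ ≤ c := iSup_le htrunc

theorem ρ_eq_iSup_indicator_min {K : ℕ → Set α} (hK : Monotone K) (hKU : ⋃ m, K m = Set.univ)
    (f : α → ℝ≥0∞) : X.ρ f = ⨆ m : ℕ, X.ρ ((K m).indicator fun x => min (f x) m) := by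
  have hF : Monotone fun (m : ℕ) x => min (f x) m := fun i j hij x =>
    min_le_min_left _ (by exact_mod_cast hij)
  rw [← X.ρ_fatou _ fun j => Eventually.of_forall (monotone_indicator_seq hK hF j.le_succ)]
  congr with x
  rw [iSup_indicator_seq_apply hK hKU hF, ENNReal.iSup_min_natCast]

-- Elements of `L²(B)` are only determined a.e. on `B`, hence the extension by zero.
def unitBallL2 (B : Set α) : Set (Lp ℝ 2 (volume.restrict B)) :=
  {ψ | X.ρ (B.indicator fun x => ‖ψ x‖ₑ) ≤ 1}

theorem mem_unitBallL2 {ψ : Lp ℝ 2 (volume.restrict B)} :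
    ψ ∈ X.unitBallL2 B ↔ X.ρ (B.indicator fun x => ‖ψ x‖ₑ) ≤ 1 :=
  Iff.rfl

theorem ρ_indicator_enorm_congr (hB : MeasurableSet B) {w₁ w₂ : α → ℝ}
    (h : w₁ =ᵐ[volume.restrict B] w₂) :
    X.ρ (B.indicator fun x => ‖w₁ x‖ₑ) = X.ρ (B.indicator fun x => ‖w₂ x‖ₑ) :=
  X.ρ_congr_ae ((ae_eq_restrict_iff_indicator_ae_eq hB).1 (h.fun_comp _))

theorem zero_mem_unitBallL2 (hB : MeasurableSet B) : 0 ∈ X.unitBallL2 B := by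
  rw [mem_unitBallL2, X.ρ_indicator_enorm_congr hB (Lp.coeFn_zero ℝ 2 _)]
  simp only [Pi.zero_apply, enorm_zero, Set.indicator_zero]
  exact ((X.ρ_zero _).2 (Eventually.of_forall fun _ => rfl)).trans_le zero_le_one

theorem convex_unitBallL2 (hB : MeasurableSet B) : Convex ℝ (X.unitBallL2 B) := by
  intro ψ₁ h₁ ψ₂ h₂ a b ha hb hab
  lift a to ℝ≥0 using ha
  lift b to ℝ≥0 using hb
  have hcoe : ⇑((a : ℝ) • ψ₁ + (b : ℝ) • ψ₂) =ᵐ[volume.restrict B]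
      fun x => (a : ℝ) * ψ₁ x + (b : ℝ) * ψ₂ x := by
    filter_upwards [Lp.coeFn_add ((a : ℝ) • ψ₁) ((b : ℝ) • ψ₂), Lp.coeFn_smul (a : ℝ) ψ₁,
      Lp.coeFn_smul (b : ℝ) ψ₂] with x hx h₁ h₂
    rw [hx, Pi.add_apply, h₁, h₂]
    rfl
  have hpt (x : α) : B.indicator (fun x => ‖(a : ℝ) * ψ₁ x + (b : ℝ) * ψ₂ x‖ₑ) x ≤
      a * B.indicator (fun x => ‖ψ₁ x‖ₑ) x + b * B.indicator (fun x => ‖ψ₂ x‖ₑ) x := by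
    by_cases hx : x ∈ B
    · simp only [Set.indicator_of_mem hx]
      refine (enorm_add_le _ _).trans_eq ?_
      rw [enorm_mul, enorm_mul, NNReal.enorm_eq, NNReal.enorm_eq]
    · simp [Set.indicator_of_notMem hx]
  have hab' : a + b = 1 := by exact_mod_cast hab
  rw [mem_unitBallL2, X.ρ_indicator_enorm_congr hB hcoe]
  calc _ ≤ X.ρ (fun x => a * B.indicator (fun x => ‖ψ₁ x‖ₑ) x +
          b * B.indicator (fun x => ‖ψ₂ x‖ₑ) x) := X.ρ_mono _ _ (Eventually.of_forall hpt)
    _ ≤ a * X.ρ (B.indicator fun x => ‖ψ₁ x‖ₑ) + b * X.ρ (B.indicator fun x => ‖ψ₂ x‖ₑ) := by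
        rw [← X.ρ_smul, ← X.ρ_smul]; exact X.ρ_add _ _
    _ ≤ a * 1 + b * 1 := by gcongr <;> assumption
    _ = 1 := by rw [mul_one, mul_one, ← ENNReal.coe_add, hab', ENNReal.coe_one]

theorem isClosed_unitBallL2 (hB : MeasurableSet B) : IsClosed (X.unitBallL2 B) := by
  refine IsSeqClosed.isClosed fun ψs ψ hψs hlim => ?_
  obtain ⟨ns, -, hae⟩ := (tendstoInMeasure_of_tendsto_Lp hlim).exists_seq_tendsto_ae
  have hliminf : B.indicator (fun x => ‖ψ x‖ₑ) =ᵐ[volume]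
      fun x => liminf (fun i => B.indicator (fun x => ‖ψs (ns i) x‖ₑ) x) atTop := by
    filter_upwards [(ae_restrict_iff' hB).1 hae] with x hx
    by_cases hxB : x ∈ B
    · simp only [Set.indicator_of_mem hxB]
      exact ((continuous_enorm.tendsto _).comp (hx hxB)).liminf_eq.symm
    · simp [Set.indicator_of_notMem hxB]
  calc X.ρ _ = _ := X.ρ_congr_ae hliminf
    _ ≤ _ := X.ρ_liminf_le _
    _ ≤ 1 := liminf_le_of_frequently_le' (Frequently.of_forall fun i => hψs (ns i))

theorem associate_indicator_le_of_inner_lt (hB : MeasurableSet B) (hB_fin : volume B ≠ ∞)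
    (g : Lp ℝ 2 (volume.restrict B)) {u : ℝ} (hg : ∀ ψ ∈ X.unitBallL2 B, ⟪g, ψ⟫_ℝ < u) :
    X.associate (B.indicator fun x => ‖g x‖ₑ) ≤ ENNReal.ofReal u := by
  have : IsFiniteMeasure (volume.restrict B) := isFiniteMeasure_restrict.2 hB_fin
  have hg_meas : Measurable g := (Lp.stronglyMeasurable g).measurable
  refine X.associate_le_of_forall_bounded (hg_meas.enorm.indicator hB)
    (fun x => ((Set.indicator_le_self _ _ x).trans_lt (enorm_lt_top (x := g x))).ne) ?_
  rintro φ hφ ⟨M, hφM⟩ hφX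
  have hφ_top (x : α) : φ x ≠ ∞ := ne_top_of_le_ne_top ENNReal.coe_ne_top (hφM x)
  -- Test `g` against `φ` times the phase of `g`, which lies in the unit ball of `X`.
  set w : α → ℝ := fun x => (φ x).toReal * phase (g x)
  have hw_norm (x : α) : ‖w x‖ ≤ (φ x).toReal := by
    rw [norm_mul, Real.norm_of_nonneg ENNReal.toReal_nonneg]
    exact mul_le_of_le_one_right ENNReal.toReal_nonneg (norm_phase_le_one _)
  have hw : MemLp w 2 (volume.restrict B) :=
    MemLp.of_bound (hφ.ennreal_toReal.mul (measurable_phase.comp hg_meas)).aestronglyMeasurable M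
      (Eventually.of_forall fun x => (hw_norm x).trans (ENNReal.toReal_le_coe_of_le_coe (hφM x)))
  have hw_mem : hw.toLp w ∈ X.unitBallL2 B := by
    rw [mem_unitBallL2, X.ρ_indicator_enorm_congr hB hw.coeFn_toLp]
    refine (X.ρ_mono _ _ (Eventually.of_forall fun x => ?_)).trans hφX
    refine (Set.indicator_le_self _ _ x).trans ?_
    rw [← ofReal_norm, ← ENNReal.ofReal_toReal (hφ_top x)]
    exact ENNReal.ofReal_le_ofReal (hw_norm x)
  have hinner : (fun x => ⟪g x, hw.toLp w x⟫_ℝ) =ᵐ[volume.restrict B]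
      fun x => (φ x).toReal * ‖g x‖ := by
    filter_upwards [hw.coeFn_toLp] with x hx
    rw [hx, Real.inner_apply, mul_left_comm, mul_phase]
    rfl
  have hint := (L2.integrable_inner g (hw.toLp w)).congr hinner
  calc ∫⁻ x, φ x * B.indicator (fun x => ‖g x‖ₑ) x
      = ∫⁻ x in B, φ x * ‖g x‖ₑ := lintegral_mul_indicator hB _ _
    _ = ENNReal.ofReal (∫ x in B, (φ x).toReal * ‖g x‖) := by
        rw [ofReal_integral_eq_lintegral_ofReal hint (Eventually.of_forall fun x => by positivity)]
        refine lintegral_congr fun x => ?_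
        rw [ENNReal.ofReal_mul ENNReal.toReal_nonneg, ENNReal.ofReal_toReal (hφ_top x), ofReal_norm]
    _ ≤ ENNReal.ofReal u := by
        rw [← integral_congr_ae hinner, ← L2.inner_def]
        exact ENNReal.ofReal_le_ofReal (hg _ hw_mem).le

theorem ofReal_lt_lintegral_mul_indicator_of_lt_inner (hB : MeasurableSet B)
    (g : Lp ℝ 2 (volume.restrict B)) {φ : α → ℝ≥0∞}
    (hφ : MemLp (fun x => (φ x).toReal) 2 (volume.restrict B)) {u : ℝ} (hu : 0 < u)
    (h : u < ⟪g, hφ.toLp _⟫_ℝ) :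
    ENNReal.ofReal u < ∫⁻ x, φ x * B.indicator (fun x => ‖g x‖ₑ) x := by
  calc ENNReal.ofReal u < ENNReal.ofReal ⟪g, hφ.toLp _⟫_ℝ :=
        (ENNReal.ofReal_lt_ofReal_iff (hu.trans h)).2 h
    _ ≤ ‖⟪g, hφ.toLp _⟫_ℝ‖ₑ := Real.ofReal_le_enorm _
    _ ≤ ∫⁻ x in B, ‖⟪g x, hφ.toLp _ x⟫_ℝ‖ₑ := by
        rw [L2.inner_def]
        exact enorm_integral_le_lintegral_enorm _
    _ = ∫⁻ x in B, ‖(φ x).toReal‖ₑ * ‖g x‖ₑ := by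
        refine lintegral_congr_ae ?_
        filter_upwards [hφ.coeFn_toLp] with x hx
        rw [hx, Real.inner_apply, enorm_mul, mul_comm]
    _ ≤ ∫⁻ x in B, φ x * ‖g x‖ₑ := by
        refine lintegral_mono fun x => mul_le_mul_left ?_ _
        rw [← ofReal_norm, Real.norm_of_nonneg ENNReal.toReal_nonneg]
        exact ENNReal.ofReal_toReal_le
    _ = ∫⁻ x, φ x * B.indicator (fun x => ‖g x‖ₑ) x := (lintegral_mul_indicator hB _ _).symm

theorem exists_associate_le_one_lintegral_mul_gt_one (hB : MeasurableSet B)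
    (hB_fin : volume B ≠ ∞) {φ : α → ℝ≥0∞} (hφ : AEMeasurable φ) {M : ℝ≥0}
    (hφM : ∀ x, φ x ≤ M) (hφB : ∀ x ∉ B, φ x = 0) (hφX : 1 < X.ρ φ) :
    ∃ G : α → ℝ≥0∞, Measurable G ∧ X.associate G ≤ 1 ∧ 1 < ∫⁻ x, φ x * G x := by
  have : IsFiniteMeasure (volume.restrict B) := isFiniteMeasure_restrict.2 hB_fin
  have hψ : MemLp (fun x => (φ x).toReal) 2 (volume.restrict B) :=
    MemLp.of_bound hφ.ennreal_toReal.aestronglyMeasurable.restrict M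
      (Eventually.of_forall fun x => by
        simpa using ENNReal.toReal_le_coe_of_le_coe (hφM x))
  have hψ_notMem : hψ.toLp _ ∉ X.unitBallL2 B := by
    rw [mem_unitBallL2, X.ρ_indicator_enorm_congr hB hψ.coeFn_toLp, not_le]
    convert hφX using 2
    ext x
    by_cases hx : x ∈ B
    · rw [Set.indicator_of_mem hx, ← ofReal_norm, Real.norm_of_nonneg ENNReal.toReal_nonneg,
        ENNReal.ofReal_toReal (ne_top_of_le_ne_top ENNReal.coe_ne_top (hφM x))]
    · rw [Set.indicator_of_notMem hx, hφB x hx]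
  obtain ⟨g, u, hgX, hgψ⟩ := exists_inner_lt_of_notMem (X.convex_unitBallL2 hB)
    (X.isClosed_unitBallL2 hB) hψ_notMem
  have hu : 0 < u := by simpa using hgX 0 (X.zero_mem_unitBallL2 hB)
  have hu' : ENNReal.ofReal u ≠ 0 := (ENNReal.ofReal_pos.2 hu).ne'
  refine ⟨fun x => (ENNReal.ofReal u)⁻¹ * B.indicator (fun x => ‖g x‖ₑ) x,
    ((Lp.stronglyMeasurable g).measurable.enorm.indicator hB).const_mul _, ?_, ?_⟩
  · rw [X.associate_const_mul (ENNReal.inv_ne_top.2 hu'),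
      ENNReal.inv_mul_le_iff hu' ENNReal.ofReal_ne_top, mul_one]
    exact X.associate_indicator_le_of_inner_lt hB hB_fin g hgX
  · simp_rw [mul_left_comm (φ _)]
    rw [lintegral_const_mul' _ _ (ENNReal.inv_ne_top.2 hu'),
      ENNReal.one_lt_inv_mul_iff hu' ENNReal.ofReal_ne_top]
    exact ofReal_lt_lintegral_mul_indicator_of_lt_inner hB g hψ hu hgψ

theorem exists_associate_le_one_lt_lintegral_mul (hB : MeasurableSet B)
    (hB_fin : volume B ≠ ∞) {φ : α → ℝ≥0∞} (hφ : AEMeasurable φ) {M : ℝ≥0}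
    (hφM : ∀ x, φ x ≤ M) (hφB : ∀ x ∉ B, φ x = 0) {c : ℝ≥0∞} (hc : c < X.ρ φ) :
    ∃ G : α → ℝ≥0∞, Measurable G ∧ X.associate G ≤ 1 ∧ c < ∫⁻ x, φ x * G x := by
  obtain ⟨d, hcd, hdφ⟩ := exists_between hc
  have hd0 : d ≠ 0 := (zero_le.trans_lt hcd).ne'
  lift d to ℝ≥0 using hdφ.ne_top
  have hd_inv : ((d⁻¹ : ℝ≥0) : ℝ≥0∞) = (d : ℝ≥0∞)⁻¹ := ENNReal.coe_inv (by simpa using hd0)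
  obtain ⟨G, hG, hGX, hG1⟩ := X.exists_associate_le_one_lintegral_mul_gt_one hB hB_fin
    (φ := fun x => (d⁻¹ : ℝ≥0) * φ x) (M := d⁻¹ * M) (hφ.const_mul _)
    (fun x => by rw [ENNReal.coe_mul]; exact mul_le_mul_right (hφM x) _)
    (fun x hx => by rw [hφB x hx, mul_zero])
    (by rwa [X.ρ_smul, hd_inv, ENNReal.one_lt_inv_mul_iff hd0 ENNReal.coe_ne_top])
  refine ⟨G, hG, hGX, hcd.trans ?_⟩
  simp_rw [mul_assoc] at hG1
  rwa [lintegral_const_mul' _ _ ENNReal.coe_ne_top, hd_inv,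
    ENNReal.one_lt_inv_mul_iff hd0 ENNReal.coe_ne_top] at hG1

theorem exists_simpleFunc_associate_le_one_lt_lintegral_mul [TopologicalSpace α]
    [SigmaCompactSpace α] [T2Space α] [OpensMeasurableSpace α]
    [IsFiniteMeasureOnCompacts (volume : Measure α)] {f : α → ℝ≥0∞} (hf : AEMeasurable f)
    {c : ℝ≥0∞} (hc : c < X.ρ f) :
    ∃ r : SimpleFunc α ℝ≥0, HasCompactSupport r ∧ X.associate (fun x => r x) ≤ 1 ∧
      c < ∫⁻ x, f x * r x := by
  rw [X.ρ_eq_iSup_indicator_min (fun _ _ h => compactCovering_subset α h)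
    (iUnion_compactCovering α)] at hc
  obtain ⟨m, hm⟩ := lt_iSup_iff.1 hc
  set φ := (compactCovering α m).indicator fun x => min (f x) m
  have hK := isCompact_compactCovering α m
  have hφ : AEMeasurable φ := (hf.min aemeasurable_const).indicator hK.measurableSet
  have hφf (x : α) : φ x ≤ min (f x) m := Set.indicator_le_self _ _ x
  obtain ⟨G, hG, hGX, hcG⟩ := X.exists_associate_le_one_lt_lintegral_mul hK.measurableSet
    hK.measure_lt_top.ne hφ (M := m) (fun x => (hφf x).trans (by simp))
    (fun x hx => Set.indicator_of_notMem hx _) hm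
  obtain ⟨r, hr, hrG, hcr⟩ := exists_simpleFunc_le_lt_lintegral_mul hφ hG hcG
  refine ⟨r, hr, (X.associate_mono hrG).trans hGX, hcr.trans_le (lintegral_mono fun x => ?_)⟩
  exact mul_le_mul_left ((hφf x).trans (min_le_left _ _)) _

end BanachFunctionNorm

/-- For every Banach function space `X(ℝⁿ)` and every `f ∈ X(ℝⁿ)`, the norm of `f` is the
supremum of `|∫ f s|` over simple compactly supported `s` with `‖s‖_{X'} ≤ 1`. -/
theorem norm_eq_sup_pairing_simple_compactSupport {n : ℕ}
    (X : BanachFunctionNorm (EuclideanSpace ℝ (Fin n)))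
    (f : EuclideanSpace ℝ (Fin n) → ℂ) (hf : AEMeasurable f)
    (hfX : X.ρ (fun x => (‖f x‖₊ : ℝ≥0∞)) < ⊤) :
    X.ρ (fun x => (‖f x‖₊ : ℝ≥0∞)) =
      ⨆ s : {s : SimpleFunc (EuclideanSpace ℝ (Fin n)) ℂ //
          HasCompactSupport ⇑s ∧ X.associate (fun x => (‖s x‖₊ : ℝ≥0∞)) ≤ 1},
        (‖∫ x, f x * s.1 x‖₊ : ℝ≥0∞) := by
  refine le_antisymm (le_of_forall_lt fun c hc => ?_) (iSup_le fun s => ?_)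
  · obtain ⟨r, hr, hrX, hcr⟩ := X.exists_simpleFunc_associate_le_one_lt_lintegral_mul hf.enorm hc
    obtain ⟨s, hsr, hcs⟩ := exists_simpleFunc_nnnorm_le_lt_enorm_integral_mul
      hf.aestronglyMeasurable r ((X.lintegral_mul_le_ρ _ hrX).trans_lt hfX).ne hcr
    have hs : HasCompactSupport s := hr.mono fun x hx h0 => hx (by simpa [h0] using hsr x)
    have hsX : X.associate (fun x => (‖s x‖₊ : ℝ≥0∞)) ≤ 1 :=
      (X.associate_mono fun x => ENNReal.coe_le_coe.2 (hsr x)).trans hrX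
    exact hcs.trans_le (le_iSup_of_le ⟨s, hs, hsX⟩ le_rfl)
  · calc (‖∫ x, f x * s.1 x‖₊ : ℝ≥0∞) ≤ ∫⁻ x, ‖f x‖₊ * ‖s.1 x‖₊ :=
          (enorm_integral_le_lintegral_enorm _).trans_eq (lintegral_congr fun x => enorm_mul _ _)
      _ ≤ _ := X.lintegral_mul_le_ρ _ s.2.2
end
end

section
/- Let X(ℝⁿ) be a translation-invariant Banach function space. Then for all τ > 1, R > 0, and y ∈ ℝⁿ, the ratio ‖χ_{B(y,τR)}‖_X / ‖χ_{B(y,R)}‖_X is at most (4√n · τ)ⁿ. In particular, every translation-invariant Banach function space satisfies the doubling property. -/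
open MeasureTheory Filter ENNReal Metric

noncomputable section

/-!
Cover `B(y, τR)` by the balls of radius `R` centred at the lattice points `y + (R / √n) • m`,
`m ∈ ℤⁿ`, `|mᵢ| ≤ ⌊τ√n + 1/2⌋`: rounding each coordinate of `x ∈ B(y, τR)` gives a lattice point
within `√n · R / (2√n) = R / 2` of `x`. There are `(2⌊τ√n + 1/2⌋ + 1)ⁿ ≤ (4√n τ)ⁿ` such balls, and
by subadditivity and translation invariance each contributes at most `‖χ_{B(y,R)}‖_X`.
-/

namespace BanachFunctionNorm

variable {α : Type} [MeasureSpace α] (X : BanachFunctionNorm α)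

def IsTranslationInvariant {E : Type} [AddGroup E] [MeasureSpace E] (X : BanachFunctionNorm E) :
    Prop :=
  ∀ (y : E) (f : E → ℝ≥0∞), X.ρ (fun x => f (x - y)) = X.ρ f

lemma ρ_zero_eq_zero : X.ρ 0 = 0 := (X.ρ_zero 0).mpr EventuallyEq.rfl

lemma ρ_finset_sum_le {ι : Type*} (s : Finset ι) (f : ι → α → ℝ≥0∞) :
    X.ρ (∑ i ∈ s, f i) ≤ ∑ i ∈ s, X.ρ (f i) :=
  Finset.le_sum_of_subadditive X.ρ X.ρ_zero_eq_zero.le X.ρ_add s f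

lemma ρ_indicator_le_sum_of_subset_biUnion {ι : Type*} {S : Set α} (s : Finset ι) (T : ι → Set α)
    (hS : S ⊆ ⋃ i ∈ s, T i) :
    X.ρ (S.indicator 1) ≤ ∑ i ∈ s, X.ρ ((T i).indicator 1) := by
  refine (X.ρ_mono _ _ (Eventually.of_forall fun x => ?_)).trans (X.ρ_finset_sum_le s _)
  by_cases hx : x ∈ S
  · obtain ⟨i, hi, hxi⟩ := Set.mem_iUnion₂.mp (hS hx)
    rw [Set.indicator_of_mem hx, Finset.sum_apply, ← Set.indicator_of_mem hxi 1]
    exact Finset.single_le_sum (f := fun j => (T j).indicator 1 x) (fun _ _ => zero_le) hi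
  · simp [hx]

lemma IsTranslationInvariant.ρ_indicator_ball_eq {E : Type} [SeminormedAddCommGroup E]
    [MeasureSpace E] {X : BanachFunctionNorm E} (hX : X.IsTranslationInvariant) (y z : E) (R : ℝ) :
    X.ρ ((ball z R).indicator 1) = X.ρ ((ball y R).indicator 1) := by
  refine (hX (y - z) _).symm.trans (congrArg X.ρ (funext fun x => ?_))
  have hshift : x - (y - z) - z = x - y := by abel
  simp only [Set.indicator, mem_ball, dist_eq_norm, hshift, Pi.one_apply]

end BanachFunctionNorm

lemma EuclideanSpace.dist_le_sqrt_card_mul {ι : Type*} [Fintype ι] {x z : EuclideanSpace ℝ ι}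
    {δ : ℝ} (hδ : 0 ≤ δ) (h : ∀ i, |x i - z i| ≤ δ) : dist x z ≤ √(Fintype.card ι) * δ := by
  rw [EuclideanSpace.dist_eq, ← Real.sqrt_sq hδ, ← Real.sqrt_mul (Nat.cast_nonneg _)]
  gcongr
  calc ∑ i, dist (x i) (z i) ^ 2 ≤ ∑ _i : ι, δ ^ 2 :=
        Finset.sum_le_sum fun i _ => by rw [Real.dist_eq]; gcongr; exact h i
    _ = Fintype.card ι * δ ^ 2 := by simp

lemma abs_round_le_floor_add_half {K : Type*} [Field K] [LinearOrder K] [IsStrictOrderedRing K]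
    [FloorRing K] {t a : K} (h : |t| ≤ a) : |round t| ≤ ⌊a + 1 / 2⌋ := by
  rw [Int.le_floor, Int.cast_abs]
  have := abs_sub_abs_le_abs_sub (round t : K) t
  rw [abs_sub_comm] at this
  linarith [abs_sub_round t]

lemma card_piFinset_Icc_neg_self (n : ℕ) {M : ℤ} (hM : 0 ≤ M) :
    ((Fintype.piFinset fun _ : Fin n => Finset.Icc (-M) M).card : ℝ) = (2 * M + 1) ^ n := by
  rw [Fintype.card_piFinset, Finset.prod_const, Finset.card_univ, Fintype.card_fin, Int.card_Icc,
    Nat.cast_pow]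
  congr 1
  have : ((M + 1 - -M).toNat : ℤ) = 2 * M + 1 := by omega
  exact_mod_cast this

def EuclideanSpace.latticePoint {ι : Type*} (y : EuclideanSpace ℝ ι) (s : ℝ) (m : ι → ℤ) :
    EuclideanSpace ℝ ι :=
  y + s • WithLp.toLp 2 (fun i => (m i : ℝ))

lemma EuclideanSpace.dist_latticePoint_round_le {ι : Type*} [Fintype ι] {s : ℝ} (hs : 0 < s)
    (x y : EuclideanSpace ℝ ι) :
    dist x (latticePoint y s fun i => round ((x i - y i) / s)) ≤ √(Fintype.card ι) * (s / 2) := by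
  refine dist_le_sqrt_card_mul (by positivity) fun i => ?_
  have hcoord : x i - (latticePoint y s fun i => round ((x i - y i) / s)) i
      = s * ((x i - y i) / s - round ((x i - y i) / s)) := by
    simp only [latticePoint, PiLp.add_apply, PiLp.smul_apply, smul_eq_mul]
    field_simp
    ring
  rw [hcoord, abs_mul, abs_of_pos hs]
  linarith [mul_le_mul_of_nonneg_left (abs_sub_round ((x i - y i) / s)) hs.le]

lemma exists_finset_card_le_ball_subset_biUnion_ball {n : ℕ} {τ R : ℝ} (hτ : 1 ≤ τ) (hR : 0 < R)
    (y : EuclideanSpace ℝ (Fin n)) :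
    ∃ F : Finset (EuclideanSpace ℝ (Fin n)),
      (F.card : ℝ) ≤ (4 * √n * τ) ^ n ∧ ball y (τ * R) ⊆ ⋃ c ∈ F, ball c R := by
  rcases n.eq_zero_or_pos with rfl | hn
  · refine ⟨{y}, by simp, fun x _ => ?_⟩
    simp [Subsingleton.elim x y, hR]
  have hsqrt : 1 ≤ √(n : ℝ) := Real.one_le_sqrt.mpr (by exact_mod_cast hn)
  set s := R / √n with hs
  have hs_pos : 0 < s := by positivity
  set M := ⌊τ * √n + 1 / 2⌋
  have hM : 0 ≤ M := Int.floor_nonneg.mpr (by positivity)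
  set grid := Fintype.piFinset fun _ : Fin n => Finset.Icc (-M) M
  refine ⟨grid.image (EuclideanSpace.latticePoint y s), ?_, fun x hx => ?_⟩
  · calc ((grid.image _).card : ℝ) ≤ grid.card := by exact_mod_cast Finset.card_image_le
      _ = (2 * M + 1) ^ n := card_piFinset_Icc_neg_self n hM
      _ ≤ (4 * √n * τ) ^ n := by
          gcongr
          linarith [Int.floor_le (τ * √n + 1 / 2), mul_le_mul hτ hsqrt zero_le_one (by linarith)]
  set m : Fin n → ℤ := fun i => round ((x i - y i) / s)
  have hm : m ∈ grid := by
    refine Fintype.mem_piFinset.mpr fun i => Finset.mem_Icc.mpr (abs_le.mp ?_)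
    refine abs_round_le_floor_add_half ?_
    rw [abs_div, abs_of_pos hs_pos, div_le_iff₀ hs_pos, hs, mul_assoc,
      mul_div_cancel₀ _ (by positivity)]
    exact (PiLp.dist_apply_le x y i).trans (mem_ball.mp hx).le
  have hdist : dist x (EuclideanSpace.latticePoint y s m) < R :=
    calc _ ≤ √(Fintype.card (Fin n)) * (s / 2) :=
          EuclideanSpace.dist_latticePoint_round_le hs_pos x y
      _ = R / 2 := by rw [Fintype.card_fin, hs]; field_simp
      _ < R := by linarith
  exact Set.mem_iUnion₂.mpr ⟨_, Finset.mem_image_of_mem _ hm, hdist⟩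

lemma BanachFunctionNorm.IsTranslationInvariant.ρ_indicator_ball_le {n : ℕ}
    {X : BanachFunctionNorm (EuclideanSpace ℝ (Fin n))} (hX : X.IsTranslationInvariant)
    {τ R : ℝ} (hτ : 1 ≤ τ) (hR : 0 < R) (y : EuclideanSpace ℝ (Fin n)) :
    X.ρ ((ball y (τ * R)).indicator 1)
      ≤ ENNReal.ofReal (4 * √n * τ) ^ n * X.ρ ((ball y R).indicator 1) := by
  obtain ⟨F, hcard, hcover⟩ := exists_finset_card_le_ball_subset_biUnion_ball hτ hR y
  calc X.ρ ((ball y (τ * R)).indicator 1)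
      ≤ ∑ c ∈ F, X.ρ ((ball c R).indicator 1) := X.ρ_indicator_le_sum_of_subset_biUnion F _ hcover
    _ = F.card * X.ρ ((ball y R).indicator 1) := by
        simp only [hX.ρ_indicator_ball_eq y, Finset.sum_const, nsmul_eq_mul]
    _ ≤ ENNReal.ofReal (4 * √n * τ) ^ n * X.ρ ((ball y R).indicator 1) := by
        rw [← ENNReal.ofReal_natCast, ← ENNReal.ofReal_pow (by positivity)]
        gcongr

/-- In a translation-invariant Banach function space on ℝⁿ, for all `τ > 1`, `R > 0` and `y`,
`‖χ_{B(y,τR)}‖_X / ‖χ_{B(y,R)}‖_X ≤ (4 √n τ)ⁿ`; in particular, every translation-invariant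
Banach function space satisfies the doubling property. -/
theorem translationInvariant_ball_ratio_le_and_doubling {n : ℕ}
    (X : BanachFunctionNorm (EuclideanSpace ℝ (Fin n)))
    (hTI : ∀ (y : EuclideanSpace ℝ (Fin n)) (f : EuclideanSpace ℝ (Fin n) → ℝ≥0∞),
        X.ρ (fun x => f (x - y)) = X.ρ f) :
    (∀ τ R : ℝ, 1 < τ → 0 < R → ∀ y : EuclideanSpace ℝ (Fin n),
      X.ρ ((Metric.ball y (τ * R)).indicator 1) / X.ρ ((Metric.ball y R).indicator 1)
        ≤ ENNReal.ofReal (4 * Real.sqrt n * τ) ^ n) ∧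
    (∃ τ : ℝ, 1 < τ ∧ ∃ Cτ : ℝ≥0∞, 0 < Cτ ∧ Cτ < ⊤ ∧
      ∀ R : ℝ, 0 < R → ∀ y : EuclideanSpace ℝ (Fin n),
        X.ρ ((Metric.ball y (τ * R)).indicator 1)
          ≤ Cτ * X.ρ ((Metric.ball y R).indicator 1)) := by
  have hX : X.IsTranslationInvariant := hTI
  refine ⟨fun τ R hτ hR y => ENNReal.div_le_of_le_mul (hX.ρ_indicator_ball_le hτ.le hR y),
    2, one_lt_two, ENNReal.ofReal (4 * √n * 2) ^ n, ?_, by finiteness,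
    fun R hR y => hX.ρ_indicator_ball_le one_le_two hR y⟩
  rcases n.eq_zero_or_pos with rfl | hn
  · simp
  · positivity
end
end

section
/- Let X(ℝ) be a translation-invariant Banach function space and w(x) = e^{cx} with c > 0. Then the weighted space X(ℝ, w) (with norm ‖f‖ = ‖fw‖_X) does not satisfy the weak doubling property; in fact, for each τ > 1, inf_{y∈ℝ} ‖χ_{B(y,τR)}‖_{X(ℝ,w)} / ‖χ_{B(y,R)}‖_{X(ℝ,w)} → ∞ as R → ∞. -/
open MeasureTheory Filter ENNReal Metric

noncomputable section

/-!
Since `w(x + s) = e^{cs} w(x)` and `X` is translation invariant, moving a ball by `s` multiplies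
the weighted norm of its indicator by `e^{cs}`. The ball `B(y, τR)` contains the translate
`B(y + (τ - 1)R, R)`, so every ratio in the infimum is at least `e^{c(τ - 1)R}`, uniformly in `y`.
-/

namespace BanachFunctionNorm

variable {α : Type} [MeasureSpace α] (X : BanachFunctionNorm α)

theorem ρ_indicator_ne_zero {E : Set α} {f : α → ℝ≥0∞} (hE : volume E ≠ 0)
    (hf : ∀ x ∈ E, f x ≠ 0) : X.ρ (E.indicator f) ≠ 0 := by
  rw [Ne, X.ρ_zero]
  refine fun h => hE (measure_mono_null (fun x hx => ?_) (ae_iff.1 h))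
  simpa [hx] using hf x hx

theorem ρ_indicator_ne_top {E : Set α} {f : α → ℝ≥0∞} {a : NNReal} (hE : MeasurableSet E)
    (hE_fin : volume E ≠ ⊤) (hf : ∀ x ∈ E, f x ≤ a) : X.ρ (E.indicator f) ≠ ⊤ := by
  have hle : X.ρ (E.indicator f) ≤ a * X.ρ (E.indicator 1) := by
    rw [← X.ρ_smul]
    refine X.ρ_mono _ _ (Eventually.of_forall fun x => ?_)
    by_cases hx : x ∈ E <;> simp [hx, hf]
  exact ne_top_of_le_ne_top (mul_ne_top coe_ne_top (X.ρ_finite E hE hE_fin.lt_top).ne) hle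

end BanachFunctionNorm

/-- `‖χ_{B(y,R)}‖_{X(ℝ,w)}` for the weight `w(x) = e^{cx}`. -/
def expWeightedBallNorm (X : BanachFunctionNorm ℝ) (c y R : ℝ) : ℝ≥0∞ :=
  X.ρ ((ball y R).indicator fun x => ENNReal.ofReal (Real.exp (c * x)))

namespace expWeightedBallNorm

variable (X : BanachFunctionNorm ℝ) (c : ℝ)

theorem add_center (hTI : ∀ (y : ℝ) (f : ℝ → ℝ≥0∞), X.ρ (fun x => f (x - y)) = X.ρ f)
    (y s R : ℝ) :
    expWeightedBallNorm X c (y + s) R =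
      ENNReal.ofReal (Real.exp (c * s)) * expWeightedBallNorm X c y R := by
  have hshift : ((ball (y + s) R).indicator fun x => ENNReal.ofReal (Real.exp (c * x))) =
      fun x => ((Real.exp (c * s)).toNNReal : ℝ≥0∞) *
        (ball y R).indicator (fun x => ENNReal.ofReal (Real.exp (c * x))) (x - s) := by
    funext x
    have hmem : x - s ∈ ball y R ↔ x ∈ ball (y + s) R := by
      simp only [mem_ball, Real.dist_eq, sub_sub, add_comm s]
    by_cases hx : x ∈ ball (y + s) R
    · rw [Set.indicator_of_mem hx, Set.indicator_of_mem (hmem.2 hx)]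
      change _ = ENNReal.ofReal _ * _
      rw [← ENNReal.ofReal_mul (Real.exp_pos _).le, ← Real.exp_add]
      ring_nf
    · rw [Set.indicator_of_notMem hx, Set.indicator_of_notMem (mt hmem.1 hx), mul_zero]
  rw [expWeightedBallNorm, hshift, X.ρ_smul, hTI]
  rfl

theorem ne_zero (y : ℝ) {R : ℝ} (hR : 0 < R) : expWeightedBallNorm X c y R ≠ 0 :=
  X.ρ_indicator_ne_zero (by simpa [Real.volume_ball] using hR) fun _ _ => by
    simpa using Real.exp_pos _

theorem ne_top (y R : ℝ) : expWeightedBallNorm X c y R ≠ ⊤ := by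
  refine X.ρ_indicator_ne_top (a := (Real.exp (|c| * (|y| + R))).toNNReal) measurableSet_ball
    (by simp [Real.volume_ball, ENNReal.mul_eq_top]) fun x hx =>
      ENNReal.ofReal_le_ofReal (Real.exp_le_exp.2 ?_)
  have hx_le : |x| ≤ |y| + R := by
    rw [mem_ball, Real.dist_eq] at hx
    linarith [abs_sub_abs_le_abs_sub x y]
  calc c * x ≤ |c| * |x| := (le_abs_self _).trans (abs_mul c x).le
    _ ≤ |c| * (|y| + R) := mul_le_mul_of_nonneg_left hx_le (abs_nonneg c)

variable {X c}

theorem exp_mul_le_div (hTI : ∀ (y : ℝ) (f : ℝ → ℝ≥0∞), X.ρ (fun x => f (x - y)) = X.ρ f)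
    {τ R : ℝ} (hτ : 1 ≤ τ) (hR : 0 < R) (y : ℝ) :
    ENNReal.ofReal (Real.exp (c * ((τ - 1) * R))) ≤
      expWeightedBallNorm X c y (τ * R) / expWeightedBallNorm X c y R := by
  rw [ENNReal.le_div_iff_mul_le (Or.inl (ne_zero X c y hR)) (Or.inl (ne_top X c y R)),
    ← add_center X c hTI]
  refine X.ρ_mono _ _ (Eventually.of_forall (Set.indicator_le_indicator_of_subset
    (ball_subset_ball' ?_) fun _ => zero_le))
  rw [Real.dist_eq, add_sub_cancel_left, abs_of_nonneg (by nlinarith)]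
  linarith

theorem tendsto_iInf_div_atTop (hTI : ∀ (y : ℝ) (f : ℝ → ℝ≥0∞), X.ρ (fun x => f (x - y)) = X.ρ f)
    (hc : 0 < c) {τ : ℝ} (hτ : 1 < τ) :
    Tendsto (fun R => ⨅ y, expWeightedBallNorm X c y (τ * R) / expWeightedBallNorm X c y R)
      atTop (nhds ⊤) := by
  refine tendsto_nhds_top_mono ?_ <| (eventually_gt_atTop 0).mono fun R hR =>
    le_iInf fun y => exp_mul_le_div hTI hτ.le hR y
  have hlin : Tendsto (fun R : ℝ => c * ((τ - 1) * R)) atTop atTop := by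
    simpa only [mul_assoc, id] using tendsto_id.const_mul_atTop (mul_pos hc (sub_pos.2 hτ))
  exact ENNReal.tendsto_ofReal_atTop.comp (Real.tendsto_exp_atTop.comp hlin)

end expWeightedBallNorm

/-- For a translation-invariant Banach function space `X(ℝ)` and the weight `w(x) = e^{cx}`,
`c > 0`, the weighted space `X(ℝ,w)` fails the weak doubling property; in fact, for each
`τ > 1` the infimum over `y` of the ratios of the norms of the indicators of the concentric
balls of radii `τR` and `R` tends to infinity as `R → ∞`. -/
theorem exp_weight_fails_weak_doubling (X : BanachFunctionNorm ℝ)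
    (hTI : ∀ (y : ℝ) (f : ℝ → ℝ≥0∞), X.ρ (fun x => f (x - y)) = X.ρ f)
    (c : ℝ) (hc : 0 < c) :
    (∀ τ : ℝ, 1 < τ →
      Filter.Tendsto (fun R : ℝ => ⨅ y : ℝ,
        X.ρ ((Metric.ball y (τ * R)).indicator fun x => ENNReal.ofReal (Real.exp (c * x))) /
        X.ρ ((Metric.ball y R).indicator fun x => ENNReal.ofReal (Real.exp (c * x))))
        Filter.atTop (nhds ⊤)) ∧
    ¬ (∃ τ : ℝ, 1 < τ ∧
      Filter.liminf (fun R : ℝ => ⨅ y : ℝ,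
        X.ρ ((Metric.ball y (τ * R)).indicator fun x => ENNReal.ofReal (Real.exp (c * x))) /
        X.ρ ((Metric.ball y R).indicator fun x => ENNReal.ofReal (Real.exp (c * x))))
        Filter.atTop < ⊤) := by
  have htendsto τ (hτ : 1 < τ) := expWeightedBallNorm.tendsto_iInf_div_atTop hTI hc hτ
  exact ⟨htendsto, fun ⟨τ, hτ, hlt⟩ => hlt.ne (htendsto τ hτ).liminf_eq⟩
end
end
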